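/- arXiv:cs/0607014 — 2 statements merged into one kernel-verified Lean document; each statement's English description precedes it below -/
import Mathlib

section
/- Let P be a probability measure with countable atom set C, and X_1,...,X_n i.i.d. ~ P. Define the Good-Turing estimator ζ_k = ((k+1)/n)·(number of atoms appearing exactly k+1 times). Then for k ≥ 1, E[ζ_k] = E[g_k^{n-1}((n-1) P({X}))], where g_k^m(y) = C(m,k)(y/m)^k (1 - y/m)^{m-k} and X ~ P. -/
open scoped Classical

open MeasureTheory Finset

open scoped ENNReal

/-!
For each atom `a` of `P`, the number of indices `i` with `x i = a` is binomial with parameters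
`n` and `P {a}`, so, summing over the countably many atoms, the expected number of atoms seen
exactly `k + 1` times is `∑ₐ C(n, k+1) P{a}^(k+1) (1 - P{a})^(n-k-1)`. The identity
`(k+1)/n · C(n, k+1) = C(n-1, k)` rewrites each summand of `(k+1)/n` times this sum as
`C(n-1, k) P{a}^k (1 - P{a})^(n-1-k) · P{a}`, the mass the integral against `P` gives to `a`;
since `k ≥ 1` the integrand vanishes off the atoms, so nothing else contributes.
-/

section Binomial

variable {α ι : Type*} [Fintype ι]

theorem setOf_filter_mem_eq_pi (B : Set α) (S : Finset ι) :
    {x : ι → α | univ.filter (fun i => x i ∈ B) = S} =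
      Set.univ.pi fun i => if i ∈ S then B else Bᶜ := by
  ext x
  simp only [Set.mem_univ_pi, Finset.ext_iff, Finset.mem_filter, Finset.mem_univ, true_and]
  refine forall_congr' fun i => ?_
  split_ifs with hi <;> simp [hi]

theorem setOf_card_filter_mem_eq_biUnion (B : Set α) (m : ℕ) :
    {x : ι → α | #{i | x i ∈ B} = m} =
      ⋃ S ∈ powersetCard m univ, {x | univ.filter (fun i => x i ∈ B) = S} := by
  ext x
  simp

variable [MeasurableSpace α] {B : Set α}

theorem measurableSet_setOf_filter_mem_eq (hB : MeasurableSet B) (S : Finset ι) :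
    MeasurableSet {x : ι → α | univ.filter (fun i => x i ∈ B) = S} := by
  rw [setOf_filter_mem_eq_pi]
  exact .univ_pi fun i => by split_ifs; exacts [hB, hB.compl]

theorem measurableSet_setOf_card_filter_mem_eq (hB : MeasurableSet B) (m : ℕ) :
    MeasurableSet {x : ι → α | #{i | x i ∈ B} = m} := by
  rw [setOf_card_filter_mem_eq_biUnion]
  exact Finset.measurableSet_biUnion _ fun S _ => measurableSet_setOf_filter_mem_eq hB S

variable (P : Measure α) [IsProbabilityMeasure P]

theorem measure_pi_setOf_filter_mem_eq (hB : MeasurableSet B) (S : Finset ι) :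
    Measure.pi (fun _ : ι => P) {x | univ.filter (fun i => x i ∈ B) = S} =
      P B ^ #S * (1 - P B) ^ (Fintype.card ι - #S) := by
  rw [setOf_filter_mem_eq_pi, Measure.pi_pi]
  simp_rw [apply_ite P, prob_compl_eq_one_sub hB]
  rw [Finset.prod_ite, prod_const, prod_const, filter_mem_eq_inter, univ_inter, filter_not,
    filter_mem_eq_inter, univ_inter, ← compl_eq_univ_sdiff, card_compl]

theorem measure_pi_setOf_card_filter_mem_eq (hB : MeasurableSet B) (m : ℕ) :
    Measure.pi (fun _ : ι => P) {x | #{i | x i ∈ B} = m} =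
      (Fintype.card ι).choose m * P B ^ m * (1 - P B) ^ (Fintype.card ι - m) := by
  have hdisj : (powersetCard m (univ : Finset ι) : Set (Finset ι)).PairwiseDisjoint
      fun S => {x : ι → α | univ.filter (fun i => x i ∈ B) = S} :=
    fun S _ T _ hST => Set.disjoint_left.2 fun x hS hT => hST (hS.symm.trans hT)
  rw [setOf_card_filter_mem_eq_biUnion,
    measure_biUnion_finset hdisj fun S _ => measurableSet_setOf_filter_mem_eq hB S,
    sum_congr rfl fun S hS => by
      rw [measure_pi_setOf_filter_mem_eq P hB, (mem_powersetCard.1 hS).2],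
    sum_const, card_powersetCard, card_univ, nsmul_eq_mul, mul_assoc]

end Binomial

section Countable

variable {Ω β : Type*} [MeasurableSpace Ω] [MeasurableSingletonClass Ω] {s : Set Ω}

theorem countable_setOf_measure_singleton_pos (P : Measure Ω) [SFinite P] :
    {ω | 0 < P {ω}}.Countable :=
  Measure.countable_meas_pos_of_disjoint_iUnion measurableSet_singleton
    fun _ _ h => Set.disjoint_singleton.2 h

theorem measurable_of_support_subset_countable [MeasurableSpace β] [Zero β] {g : Ω → β}
    (hs : s.Countable) (hg : g.support ⊆ s) : Measurable g :=
  measurable_const.measurable_of_countable_ne (hs.mono fun _ hω => hg (Ne.symm hω))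

theorem lintegral_eq_tsum_of_support_subset_countable (μ : Measure Ω) {g : Ω → ℝ≥0∞}
    (hs : s.Countable) (hg : g.support ⊆ s) :
    ∫⁻ ω, g ω ∂μ = ∑' a : s, g a * μ {(a : Ω)} := by
  rw [← lintegral_countable g hs, setLIntegral_eq_of_support_subset hg]

end Countable

section Counting

variable {α β : Type*} {A : Set β} {E : β → Set α}

theorem encard_setOf_mem_eq_tsum_indicator (A : Set β) (E : β → Set α) (x : α) :
    ({a ∈ A | x ∈ E a}.encard : ℝ≥0∞) = ∑' a : A, (E a).indicator 1 x := by
  rw [← ENNReal.tsum_set_one, _root_.tsum_subtype _ (fun _ => 1),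
    _root_.tsum_subtype A fun a => (E a).indicator 1 x]
  congr 1 with a
  by_cases ha : a ∈ A <;> by_cases hx : x ∈ E a <;> simp [ha, hx]

variable [MeasurableSpace α]

theorem lintegral_encard_setOf_mem (μ : Measure α) (hA : A.Countable)
    (hE : ∀ a, MeasurableSet (E a)) :
    ∫⁻ x, ({a ∈ A | x ∈ E a}.encard : ℝ≥0∞) ∂μ = ∑' a : A, μ (E a) := by
  have := hA.to_subtype
  simp_rw [encard_setOf_mem_eq_tsum_indicator]
  rw [lintegral_tsum fun a : A => (measurable_one.indicator (hE a)).aemeasurable]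
  simp [lintegral_indicator_one (hE _)]

theorem integral_ncard_setOf_mem (μ : Measure α) (hA : A.Countable)
    (hE : ∀ a, MeasurableSet (E a)) (hfin : ∀ x, {a ∈ A | x ∈ E a}.Finite) :
    ∫ x, ({a ∈ A | x ∈ E a}.ncard : ℝ) ∂μ = (∑' a : A, μ (E a)).toReal := by
  have := hA.to_subtype
  have hmeas : Measurable fun x => ({a ∈ A | x ∈ E a}.encard : ℝ≥0∞) := by
    simp_rw [encard_setOf_mem_eq_tsum_indicator]
    exact .tsum fun a => measurable_one.indicator (hE a)
  rw [← lintegral_encard_setOf_mem μ hA hE, ← integral_toReal hmeas.aemeasurable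
    (.of_forall fun x => by simp [(hfin x).encard_lt_top])]
  congr 1 with x
  simp [← (hfin x).cast_ncard_eq]

end Counting

section GoodTuring

variable {Ω : Type*} [MeasurableSpace Ω] [MeasurableSingletonClass Ω] (P : Measure Ω)
  [IsProbabilityMeasure P]

theorem integral_ncard_setOf_measure_singleton_pos_card_eq (n : ℕ) {m : ℕ} (hm : m ≠ 0) :
    ∫ x : Fin n → Ω, (Set.ncard {ω | 0 < P {ω} ∧ #{i | x i = ω} = m} : ℝ)
        ∂(Measure.pi fun _ : Fin n => P) =
      (∑' a : {ω | 0 < P {ω}},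
        n.choose m * P {(a : Ω)} ^ m * (1 - P {(a : Ω)}) ^ (n - m)).toReal := by
  have hE (a : Ω) : MeasurableSet {x : Fin n → Ω | #{i | x i = a} = m} := by
    simpa only [Set.mem_singleton_iff] using
      measurableSet_setOf_card_filter_mem_eq (ι := Fin n) (measurableSet_singleton a) m
  have hfin (x : Fin n → Ω) : {ω | 0 < P {ω} ∧ #{i | x i = ω} = m}.Finite := by
    refine (Set.finite_range x).subset fun ω ⟨_, hω⟩ => ?_
    obtain ⟨i, hi⟩ := card_pos.1 (hω ▸ Nat.pos_of_ne_zero hm)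
    exact ⟨i, (mem_filter.1 hi).2⟩
  refine (integral_ncard_setOf_mem _ (countable_setOf_measure_singleton_pos P) hE hfin).trans ?_
  congr with a
  simpa only [Set.mem_singleton_iff, Fintype.card_fin] using
    measure_pi_setOf_card_filter_mem_eq P (ι := Fin n) (measurableSet_singleton (a : Ω)) m

theorem integral_choose_mul_pow_measure_singleton (m : ℕ) {k : ℕ} (hk : k ≠ 0) :
    ∫ ω, (m.choose k : ℝ) * (P {ω}).toReal ^ k * (1 - (P {ω}).toReal) ^ (m - k) ∂P =
      (∑' a : {ω | 0 < P {ω}},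
        m.choose k * P {(a : Ω)} ^ k * (1 - P {(a : Ω)}) ^ (m - k) * P {(a : Ω)}).toReal := by
  set g : Ω → ℝ≥0∞ := fun ω => m.choose k * P {ω} ^ k * (1 - P {ω}) ^ (m - k)
  have hg : g.support ⊆ {ω | 0 < P {ω}} := fun ω hω =>
    pos_iff_ne_zero.2 fun h : P {ω} = 0 => hω (by simp [g, h, hk])
  have hatoms := countable_setOf_measure_singleton_pos P
  rw [← lintegral_eq_tsum_of_support_subset_countable P hatoms hg, ← integral_toReal
    (measurable_of_support_subset_countable hatoms hg).aemeasurable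
    (.of_forall fun ω => by finiteness)]
  congr 1 with ω
  simp [g, ENNReal.toReal_sub_of_le prob_le_one ENNReal.one_ne_top]

end GoodTuring

theorem add_one_div_mul_choose_add_one {n : ℕ} (hn : n ≠ 0) (k : ℕ) :
    ((k : ℝ≥0∞) + 1) / n * n.choose (k + 1) = (n - 1).choose k := by
  have h := Nat.add_one_mul_choose_eq (n - 1) k
  rw [Nat.sub_add_cancel (Nat.one_le_iff_ne_zero.2 hn)] at h
  rw [div_eq_mul_inv, mul_right_comm, ← div_eq_mul_inv, ← Nat.cast_add_one, ← Nat.cast_mul,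
    mul_comm, ← h, Nat.cast_mul, mul_comm, ENNReal.mul_div_cancel_right (by simpa)
    (ENNReal.natCast_ne_top n)]

theorem add_one_div_mul_binomial_succ {n : ℕ} (hn : n ≠ 0) (k : ℕ) (p q : ℝ≥0∞) :
    ((k : ℝ≥0∞) + 1) / n * (n.choose (k + 1) * p ^ (k + 1) * q ^ (n - (k + 1))) =
      (n - 1).choose k * p ^ k * q ^ (n - 1 - k) * p := by
  rw [← add_one_div_mul_choose_add_one hn, Nat.sub_sub, add_comm 1 k, pow_succ]
  ring

theorem expected_good_turing {Ω : Type*} [MeasurableSpace Ω]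
    [MeasurableSingletonClass Ω] (P : Measure Ω) [IsProbabilityMeasure P]
    (n k : ℕ) (hk : 1 ≤ k) (hn : k + 1 ≤ n) :
    (∫ x : Fin n → Ω,
        ((k : ℝ) + 1) / n *
          (Set.ncard {ω | 0 < P {ω} ∧
            (Finset.univ.filter fun i => x i = ω).card = k + 1} : ℝ)
        ∂(Measure.pi fun _ : Fin n => P)) =
      ∫ ω, ((n - 1).choose k : ℝ) * (((n : ℝ) - 1) * (P {ω}).toReal / ((n : ℝ) - 1)) ^ k *
        (1 - ((n : ℝ) - 1) * (P {ω}).toReal / ((n : ℝ) - 1)) ^ ((n - 1) - k) ∂P := by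
  have hn₀ : n ≠ 0 := by omega
  have hn₁ : (n : ℝ) - 1 ≠ 0 := by
    rw [sub_ne_zero, Nat.cast_ne_one]
    omega
  have hcoeff : ((k : ℝ) + 1) / n = (((k : ℝ≥0∞) + 1) / n).toReal := by
    simp [ENNReal.toReal_div, ENNReal.toReal_add]
  simp only [mul_div_cancel_left₀ _ hn₁]
  rw [integral_const_mul, integral_ncard_setOf_measure_singleton_pos_card_eq P n k.succ_ne_zero,
    integral_choose_mul_pow_measure_singleton P (n - 1) (Nat.one_le_iff_ne_zero.1 hk), hcoeff,
    ← ENNReal.toReal_mul, ← ENNReal.tsum_mul_left]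
  simp only [add_one_div_mul_binomial_succ hn₀]
end

section
/- Let Y_n be nonnegative random variables with Y_n → Y almost surely, and fix a nonnegative integer k. Then E[g_k^n(Y_n)] → E[y↦ Y^k e^{−Y}/k!] as n → ∞, where g_k^n(y) = C(n,k)(y/n)^k (1 − y/n)^{n−k} for 0 ≤ y ≤ n (and the event Y_n > n has vanishing contribution since Y_n → Y a.s.). -/
/-!
With `p = Y n / n`, the integrand is the binomial probability `C(n,k) p^k (1-p)^(n-k)`. It lies in
`[0, 1]` because `0 ≤ Y n ≤ n`, and along every convergent path it tends to the Poisson weight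
`Y^k e^{-Y} / k!` by the Poisson limit theorem, since `n p = Y n → Y`. Dominated convergence with
the constant bound `1` finishes the proof.
-/

open Filter MeasureTheory Topology

lemma choose_mul_pow_mul_one_sub_pow_le_one {p : ℝ} (hp₀ : 0 ≤ p) (hp₁ : p ≤ 1) (n k : ℕ) :
    (n.choose k : ℝ) * p ^ k * (1 - p) ^ (n - k) ≤ 1 := by
  rcases le_or_gt k n with hkn | hnk
  · have hq : 0 ≤ 1 - p := sub_nonneg.2 hp₁
    calc (n.choose k : ℝ) * p ^ k * (1 - p) ^ (n - k)
        = p ^ k * (1 - p) ^ (n - k) * n.choose k := by ring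
      _ ≤ ∑ m ∈ Finset.range (n + 1), p ^ m * (1 - p) ^ (n - m) * n.choose m :=
          Finset.single_le_sum (f := fun m => p ^ m * (1 - p) ^ (n - m) * (n.choose m : ℝ))
            (fun _ _ => by positivity) (Finset.mem_range.2 (Nat.lt_succ_of_le hkn))
      _ = (p + (1 - p)) ^ n := (add_pow p (1 - p) n).symm
      _ = 1 := by simp
  · simp [Nat.choose_eq_zero_of_lt hnk]

lemma norm_choose_mul_pow_mul_one_sub_pow_le_one {p : ℝ} (hp₀ : 0 ≤ p) (hp₁ : p ≤ 1) (n k : ℕ) :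
    ‖(n.choose k : ℝ) * p ^ k * (1 - p) ^ (n - k)‖ ≤ 1 := by
  have hq : 0 ≤ 1 - p := sub_nonneg.2 hp₁
  rw [Real.norm_of_nonneg (by positivity)]
  exact choose_mul_pow_mul_one_sub_pow_le_one hp₀ hp₁ n k

lemma tendsto_choose_mul_div_pow_mul_one_sub_div_pow {x : ℕ → ℝ} {y : ℝ}
    (hx : Tendsto x atTop (𝓝 y)) (k : ℕ) :
    Tendsto (fun n : ℕ => (n.choose k : ℝ) * (x n / n) ^ k * (1 - x n / n) ^ (n - k)) atTop
      (𝓝 (y ^ k * Real.exp (-y) / k.factorial)) := by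
  have hmul : Tendsto (fun n : ℕ => n * (x n / n)) atTop (𝓝 y) := by
    refine hx.congr' ?_
    filter_upwards [eventually_ne_atTop 0] with n hn
    field_simp
  rw [mul_comm (y ^ k)]
  exact ProbabilityTheory.tendsto_choose_mul_pow_of_tendsto_mul_atTop k hmul

theorem tendsto_integral_binomial_poisson_general {Ω : Type*} [MeasurableSpace Ω]
    (μ : Measure Ω) [IsProbabilityMeasure μ] (k : ℕ)
    (Y : ℕ → Ω → ℝ) (Ylim : Ω → ℝ)
    (hYmeas : ∀ n, Measurable (Y n))
    (hY_nonneg : ∀ n, ∀ᵐ ω ∂μ, 0 ≤ Y n ω)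
    (hY_le : ∀ n : ℕ, ∀ᵐ ω ∂μ, Y n ω ≤ n)
    (hconv : ∀ᵐ ω ∂μ, Tendsto (fun n => Y n ω) atTop (nhds (Ylim ω))) :
    Tendsto
      (fun n : ℕ => ∫ ω,
        (n.choose k : ℝ) * (Y n ω / n) ^ k * (1 - Y n ω / n) ^ (n - k) ∂μ)
      atTop
      (nhds (∫ ω, (Ylim ω) ^ k * Real.exp (-(Ylim ω)) / (k.factorial : ℝ) ∂μ)) := by
  refine tendsto_integral_of_dominated_convergence (fun _ => 1) (fun n => ?_)
    (integrable_const 1) (fun n => ?_) ?_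
  · have := hYmeas n
    exact (by fun_prop : Measurable _).aestronglyMeasurable
  · filter_upwards [hY_nonneg n, hY_le n] with ω h₀ h₁
    exact norm_choose_mul_pow_mul_one_sub_pow_le_one (div_nonneg h₀ n.cast_nonneg)
      (div_le_one_of_le₀ h₁ n.cast_nonneg) n k
  · filter_upwards [hconv] with ω hω
    exact tendsto_choose_mul_div_pow_mul_one_sub_div_pow hω k

theorem tendsto_integral_binomial_poisson {Ω : Type*} [MeasurableSpace Ω]
    (μ : Measure Ω) [IsProbabilityMeasure μ] (k : ℕ)
    (Y : ℕ → Ω → ℝ) (Ylim : Ω → ℝ)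
    (hYmeas : ∀ n, Measurable (Y n)) (hYlim_meas : Measurable Ylim)
    (hY_nonneg : ∀ n, ∀ᵐ ω ∂μ, 0 ≤ Y n ω)
    (hY_le : ∀ n : ℕ, ∀ᵐ ω ∂μ, Y n ω ≤ n)
    (hYlim_nonneg : ∀ᵐ ω ∂μ, 0 ≤ Ylim ω)
    (hconv : ∀ᵐ ω ∂μ, Tendsto (fun n => Y n ω) atTop (nhds (Ylim ω))) :
    Tendsto
      (fun n : ℕ => ∫ ω,
        (n.choose k : ℝ) * (Y n ω / n) ^ k * (1 - Y n ω / n) ^ (n - k) ∂μ)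
      atTop
      (nhds (∫ ω, (Ylim ω) ^ k * Real.exp (-(Ylim ω)) / (k.factorial : ℝ) ∂μ)) :=
  tendsto_integral_binomial_poisson_general μ k Y Ylim hYmeas hY_nonneg hY_le hconv
end
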